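/- Let p be an odd prime with p ≡ 3 (mod 4), and let d be the minimum distance of the quadratic residue code of length p over F_2 generated by g_R(x) = ∏_{i∈Q}(x - α^i). Then d² - d + 1 ≥ p. -/

import Mathlib

open Polynomial

/-- The polynomial `∑ cᵢ xⁱ` associated with a word `c ∈ F_2ⁿ`. -/
noncomputable def toPoly (n : ℕ) (c : Fin n → ZMod 2) : Polynomial (ZMod 2) :=
  ∑ i : Fin n, Polynomial.C (c i) * Polynomial.X ^ (i : ℕ)

theorem toPoly_add (n : ℕ) (a b : Fin n → ZMod 2) :
    toPoly n (a + b) = toPoly n a + toPoly n b := by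
  simp [toPoly, add_mul, Finset.sum_add_distrib]

theorem toPoly_smul (n : ℕ) (r : ZMod 2) (a : Fin n → ZMod 2) :
    toPoly n (r • a) = Polynomial.C r * toPoly n a := by
  simp [toPoly, Finset.mul_sum, mul_assoc]

/-- The cyclic code of length `n` over `F_2` with generator polynomial `g`:
words whose associated polynomial (of degree `< n`) is divisible by `g`. -/
noncomputable def codeOf (n : ℕ) (g : Polynomial (ZMod 2)) :
    Submodule (ZMod 2) (Fin n → ZMod 2) where
  carrier := {c | g ∣ toPoly n c}
  add_mem' := by
    intro a b ha hb
    show g ∣ toPoly n (a + b)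
    rw [toPoly_add]; exact dvd_add ha hb
  zero_mem' := by
    show g ∣ toPoly n 0
    simp [toPoly]
  smul_mem' := by
    intro r a ha
    show g ∣ toPoly n (r • a)
    rw [toPoly_smul]; exact Dvd.dvd.mul_left ha _

/-!
Put `ψ k = α ^ k`. A word lies in the code iff its polynomial vanishes at `α ^ k` for the nonzero
squares `k`, i.e. iff the transform `ĉ k = ∑ z ∈ supp c, ψ (k * z)` vanishes on the nonzero
squares.

A minimum-weight word has odd weight. Otherwise `ĉ 0 = 0` as well. Shift the word so that `0` is
in its support; then `z ↦ -1/z` (the Gleason–Prange automorphism of the extended code) maps the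
support minus `0` onto the support of a codeword of weight `d - 1`. Fourier inversion reduces
this to the vanishing of the characteristic-2 Kloosterman sums `∑_{z ≠ 0} ψ (a z + b / z)` when
`a b` is a nonsquare.

For odd weight, `-1` is a nonsquare, so `ĉ k * ĉ (-k) = 0` for every `k ≠ 0`, while
`ĉ 0 ^ 2 = 1`. Fourier inversion then shows that every residue is a difference `y - z` of two
support points. There are at most `d (d - 1) + 1` such differences.
-/

open Finset AddChar

theorem sum_add_inv_eq_zero_of_not_isSquare {F K : Type*} [Field F] [Fintype F] [DecidableEq F]
    [CommRing K] [CharP K 2] (ψ : AddChar F K) {a b : F} (hab : ¬IsSquare (a * b)) :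
    ∑ z ∈ univ.erase 0, ψ (a * z + b * z⁻¹) = 0 := by
  have ha : a ≠ 0 := by rintro rfl; exact hab ⟨0, by simp⟩
  have hb : b ≠ 0 := by rintro rfl; exact hab ⟨0, by simp⟩
  -- `z ↦ b / (a z)` fixes the summand; a fixed point `z` would make `a b = (a z) ^ 2` a square
  refine sum_involution (fun z _ => b * a⁻¹ * z⁻¹) (fun z hz => ?_) (fun z hz _ hfix => ?_)
    (fun z hz => ?_) (fun z hz => ?_)
  · have hz := ne_of_mem_erase hz
    rw [show a * (b * a⁻¹ * z⁻¹) + b * (b * a⁻¹ * z⁻¹)⁻¹ = a * z + b * z⁻¹ by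
      field_simp; ring]
    exact CharTwo.add_self_eq_zero _
  · have hz := ne_of_mem_erase hz
    refine hab ⟨a * z, ?_⟩
    field_simp at hfix
    linear_combination a * hfix
  · simp [ha, hb, ne_of_mem_erase hz]
  · field_simp

theorem neg_inv_involutive {F : Type*} [DivisionRing F] : Function.Involutive fun z : F => -z⁻¹ :=
  fun z => by simp

theorem Fintype.card_le_of_forall_exists_sub_eq {G : Type*} [AddGroup G] [Fintype G]
    [DecidableEq G] (S : Finset G) (hS : ∀ x, ∃ y ∈ S, ∃ z ∈ S, y - z = x) :
    Fintype.card G ≤ #S ^ 2 - #S + 1 := by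
  have hcover : (univ : Finset G) ⊆ insert 0 (S.offDiag.image fun q => q.1 - q.2) := by
    intro x _
    obtain ⟨y, hy, z, hz, rfl⟩ := hS x
    by_cases hyz : y = z
    · simp [hyz]
    · exact mem_insert_of_mem (mem_image.mpr ⟨(y, z), mem_offDiag.mpr ⟨hy, hz, hyz⟩, rfl⟩)
  calc Fintype.card G = #(univ : Finset G) := rfl
    _ ≤ #(S.offDiag.image fun q => q.1 - q.2) + 1 :=
        (card_le_card hcover).trans (card_insert_le _ _)
    _ ≤ #S.offDiag + 1 := by gcongr; exact card_image_le
    _ = #S ^ 2 - #S + 1 := by rw [offDiag_card, sq]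

theorem Polynomial.prod_X_sub_C_dvd_iff {L ι : Type*} [Field L] {s : Finset ι} {r : ι → L}
    (hr : Set.InjOn r s) {f : L[X]} :
    ∏ i ∈ s, (X - C (r i)) ∣ f ↔ ∀ i ∈ s, f.eval (r i) = 0 := by
  refine ⟨fun h i hi => dvd_iff_isRoot.mp ((dvd_prod_of_mem (fun i => X - C (r i)) hi).trans h),
    fun h => ?_⟩
  refine prod_dvd_of_coprime (fun i hi j hj hij => ?_) fun i hi => dvd_iff_isRoot.mpr (h i hi)
  exact isCoprime_X_sub_C_of_isUnit_sub (sub_ne_zero.mpr (hr.ne hi hj hij)).isUnit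

namespace AddChar

theorem sum_image_sub_right {p : ℕ} {K : Type*} [Field K] (ψ : AddChar (ZMod p) K)
    (S : Finset (ZMod p)) (y k : ZMod p) :
    ∑ z ∈ S.image (· - y), ψ (k * z) = (∑ z ∈ S, ψ (k * z)) / ψ (k * y) := by
  rw [sum_image fun _ _ _ _ h => sub_left_injective h, sum_div]
  simp_rw [mul_sub, map_sub_eq_div]

variable {p : ℕ} [NeZero p] {K : Type*} [Field K] [CharP K 2] {ψ : AddChar (ZMod p) K}

theorem sum_mul_eq_ite (hψ : ψ.IsPrimitive) (hp : Odd p) (b : ZMod p) :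
    ∑ x, ψ (x * b) = if b = 0 then 1 else 0 := by
  rw [sum_mulShift b hψ, ZMod.card]
  split_ifs <;> simp [CharTwo.natCast_eq_ite, Nat.not_even_iff_odd.mpr hp]

theorem sum_sum_mul_neg_eq_ite (hψ : ψ.IsPrimitive) (hp : Odd p) (S : Finset (ZMod p))
    (x : ZMod p) : ∑ m, (∑ y ∈ S, ψ (m * y)) * ψ (-(m * x)) = if x ∈ S then 1 else 0 := by
  simp_rw [sum_mul, ← map_add_eq_mul, ← mul_neg, ← mul_add]
  rw [sum_comm]
  simp_rw [sum_mul_eq_ite hψ hp, add_neg_eq_zero]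
  exact sum_ite_eq' S x fun _ => 1

theorem sum_mul_sum_mul_neg_eq_card (hψ : ψ.IsPrimitive) (hp : Odd p) (S : Finset (ZMod p))
    (x : ZMod p) :
    ∑ m, (∑ y ∈ S, ψ (m * y)) * (∑ z ∈ S, ψ (-(m * z))) * ψ (-(m * x)) =
      #{q ∈ S ×ˢ S | q.1 - q.2 = x} := by
  calc _ = ∑ m, ∑ q ∈ S ×ˢ S, ψ (m * (q.1 - q.2 - x)) := by
        refine sum_congr rfl fun m _ => ?_
        rw [sum_mul_sum, ← sum_product', sum_mul]
        refine sum_congr rfl fun q _ => ?_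
        rw [← map_add_eq_mul, ← map_add_eq_mul]
        ring_nf
    _ = #{q ∈ S ×ˢ S | q.1 - q.2 = x} := by
        rw [sum_comm]
        simp_rw [sum_mul_eq_ite hψ hp, sub_eq_zero]
        rw [sum_boole]

end AddChar

/-- For `ψ k = α ^ k` the sum is the polynomial of the word with support `S` evaluated at
`α ^ k`. -/
def IsQRSupport {p : ℕ} {K : Type*} [CommRing K] (ψ : AddChar (ZMod p) K)
    (S : Finset (ZMod p)) : Prop :=
  ∀ k : ZMod p, k ≠ 0 → IsSquare k → ∑ z ∈ S, ψ (k * z) = 0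

namespace IsQRSupport

variable {p : ℕ} [Fact p.Prime] {K : Type*} [Field K] [CharP K 2] {ψ : AddChar (ZMod p) K}

theorem image_neg_inv (hψ : ψ.IsPrimitive) (hp : Odd p) {S : Finset (ZMod p)}
    (hS : ∀ k, IsSquare k → ∑ z ∈ S, ψ (k * z) = 0) :
    IsQRSupport ψ ((S.erase 0).image fun z => -z⁻¹) := by
  intro k hk0 hk
  rw [sum_image fun _ _ _ _ h => neg_inv_involutive.injective h]
  calc ∑ z ∈ S.erase 0, ψ (k * -z⁻¹)
      = ∑ z ∈ univ.erase 0, (if z ∈ S then 1 else 0) * ψ (k * -z⁻¹) := by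
        simp_rw [ite_mul, one_mul, zero_mul]
        rw [← sum_filter]
        congr 1
        ext z
        simp [and_comm]
    _ = ∑ z ∈ univ.erase 0, ∑ m, (∑ y ∈ S, ψ (m * y)) * ψ (-m * z + -k * z⁻¹) := by
        refine sum_congr rfl fun z _ => ?_
        rw [← sum_sum_mul_neg_eq_ite hψ hp S z, sum_mul]
        refine sum_congr rfl fun m _ => ?_
        rw [mul_assoc, ← map_add_eq_mul]
        ring_nf
    _ = ∑ m, (∑ y ∈ S, ψ (m * y)) * ∑ z ∈ univ.erase 0, ψ (-m * z + -k * z⁻¹) := by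
        rw [sum_comm]
        simp_rw [mul_sum]
    _ = 0 := by
        refine sum_eq_zero fun m _ => ?_
        by_cases hm : IsSquare m
        · rw [hS m hm, zero_mul]
        · have hmk : ¬IsSquare (-m * -k) := fun h =>
            hm (by simpa [neg_mul_neg, hk0] using h.div hk)
          rw [sum_add_inv_eq_zero_of_not_isSquare ψ hmk, mul_zero]

theorem odd_card_of_minimal (hψ : ψ.IsPrimitive) (hp : Odd p) {S : Finset (ZMod p)}
    (hS : IsQRSupport ψ S) (hne : S.Nonempty)
    (hmin : ∀ T : Finset (ZMod p), T.Nonempty → IsQRSupport ψ T → #S ≤ #T) : Odd #S := by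
  by_contra heven
  rw [Nat.not_odd_iff_even] at heven
  obtain ⟨y, hy⟩ := hne
  set S₀ := S.image (· - y)
  have hS₀ : ∀ k, IsSquare k → ∑ z ∈ S₀, ψ (k * z) = 0 := by
    intro k hk
    rw [sum_image_sub_right, div_eq_zero_iff]
    left
    rcases eq_or_ne k 0 with rfl | hk0
    · simp [CharTwo.natCast_eq_ite, heven]
    · exact hS k hk0 hk
  have h0 : (0 : ZMod p) ∈ S₀ := mem_image.mpr ⟨y, hy, sub_self y⟩
  have hcard : #((S₀.erase 0).image fun z => -z⁻¹) + 1 = #S := by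
    rw [card_image_of_injective _ neg_inv_involutive.injective, card_erase_add_one h0,
      card_image_of_injective _ sub_left_injective]
  have h2 : 2 ≤ #S := by
    obtain ⟨m, hm⟩ := heven
    have := card_pos.mpr ⟨y, hy⟩
    omega
  have := hmin _ (card_pos.mp (by omega)) (image_neg_inv hψ hp hS₀)
  omega

theorem exists_sub_eq (hψ : ψ.IsPrimitive) (h4 : p % 4 = 3) {S : Finset (ZMod p)}
    (hS : IsQRSupport ψ S) (hodd : Odd #S) (x : ZMod p) : ∃ y ∈ S, ∃ z ∈ S, y - z = x := by
  have hp : Odd p := Nat.odd_iff.mpr (by omega)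
  have hneg1 : ¬IsSquare (-1 : ZMod p) := by rw [ZMod.exists_sq_eq_neg_one_iff]; omega
  have hvanish : ∀ m ≠ 0, (∑ y ∈ S, ψ (m * y)) * (∑ z ∈ S, ψ (-(m * z))) = 0 := by
    intro m hm
    by_cases hsq : IsSquare m
    · rw [hS m hm hsq, zero_mul]
    · have hnegsq : IsSquare (-m) := by
        rw [← quadraticChar_one_iff_isSquare (neg_ne_zero.mpr hm), neg_eq_neg_one_mul, map_mul,
          quadraticChar_neg_one_iff_not_isSquare.mpr hneg1,
          quadraticChar_neg_one_iff_not_isSquare.mpr hsq]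
        norm_num
      simp_rw [← neg_mul]
      rw [hS (-m) (neg_ne_zero.mpr hm) hnegsq, mul_zero]
  have hcount := sum_mul_sum_mul_neg_eq_card hψ hp S x
  rw [Fintype.sum_eq_single 0 fun m hm => by rw [hvanish m hm, zero_mul]] at hcount
  simp only [zero_mul, neg_zero, map_zero_eq_one, sum_const, nsmul_eq_mul, mul_one,
    CharTwo.natCast_eq_ite, Nat.not_even_iff_odd.mpr hodd, if_false] at hcount
  obtain ⟨⟨y, z⟩, hyz⟩ : ({q ∈ S ×ˢ S | q.1 - q.2 = x} : Finset _).Nonempty := by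
    rw [← card_pos]
    by_contra h
    simp [Nat.eq_zero_of_not_pos h] at hcount
  simp only [mem_filter, mem_product] at hyz
  exact ⟨y, hyz.1.1, z, hyz.1.2, hyz.2⟩

theorem le_card_sq_sub_card_add_one (hψ : ψ.IsPrimitive) (h4 : p % 4 = 3)
    {S : Finset (ZMod p)} (hS : IsQRSupport ψ S) (hne : S.Nonempty)
    (hmin : ∀ T : Finset (ZMod p), T.Nonempty → IsQRSupport ψ T → #S ≤ #T) :
    p ≤ #S ^ 2 - #S + 1 := by
  have hodd := hS.odd_card_of_minimal hψ (Nat.odd_iff.mpr (by omega)) hne hmin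
  simpa using Fintype.card_le_of_forall_exists_sub_eq S (hS.exists_sub_eq hψ h4 hodd)

end IsQRSupport

def finEquivZMod (p : ℕ) [NeZero p] : Fin p ≃ ZMod p where
  toFun i := (i : ℕ)
  invFun z := ⟨z.val, z.val_lt⟩
  left_inv i := Fin.ext (ZMod.val_cast_of_lt i.isLt)
  right_inv := ZMod.natCast_zmod_val

section Words

variable {p : ℕ} [NeZero p]

def supportOf (c : Fin p → ZMod 2) : Finset (ZMod p) :=
  (univ.filter fun i => c i ≠ 0).map (finEquivZMod p).toEmbedding

def wordOf (S : Finset (ZMod p)) : Fin p → ZMod 2 :=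
  fun i => if finEquivZMod p i ∈ S then 1 else 0

theorem supportOf_wordOf (S : Finset (ZMod p)) : supportOf (wordOf S) = S := by
  ext z
  simp [supportOf, wordOf]

theorem card_supportOf (c : Fin p → ZMod 2) : #(supportOf c) = #{i | c i ≠ 0} :=
  card_map _

theorem supportOf_nonempty_iff (c : Fin p → ZMod 2) : (supportOf c).Nonempty ↔ c ≠ 0 := by
  simp [supportOf, Function.ne_iff, filter_nonempty_iff]

theorem eval_map_toPoly {L : Type*} [Field L] [Algebra (ZMod 2) L] {α : L} (hα : α ^ p = 1)
    (c : Fin p → ZMod 2) (n : ℕ) :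
    ((toPoly p c).map (algebraMap (ZMod 2) L)).eval (α ^ n) =
      ∑ z ∈ supportOf c, zmodChar p hα (n * z) := by
  have hφ (x : ZMod 2) : algebraMap (ZMod 2) L x = if x ≠ 0 then 1 else 0 := by
    obtain rfl | rfl : x = 0 ∨ x = 1 := by revert x; decide
    all_goals simp
  simp only [toPoly, Polynomial.map_sum, Polynomial.map_mul, map_C, Polynomial.map_pow, map_X,
    eval_finsetSum, eval_mul, eval_C, eval_pow, eval_X, supportOf, sum_map, sum_filter, hφ,
    ite_mul, one_mul, zero_mul]
  refine sum_congr rfl fun i _ => ?_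
  rw [← pow_mul, ← zmodChar_apply' hα, Nat.cast_mul]
  rfl

theorem mem_codeOf_iff {L : Type*} [Field L] [Algebra (ZMod 2) L] {α : L}
    (hα : IsPrimitiveRoot α p) {Q : Finset ℕ}
    (hQ : (Q : Set ℕ) = {i : ℕ | i < p ∧ i ≠ 0 ∧ IsSquare ((i : ZMod p))})
    {gR : Polynomial (ZMod 2)}
    (hgR : gR.map (algebraMap (ZMod 2) L) = ∏ i ∈ Q, (X - C (α ^ i))) (c : Fin p → ZMod 2) :
    c ∈ codeOf p gR ↔ IsQRSupport (zmodChar p hα.pow_eq_one) (supportOf c) := by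
  have hQ' (i : ℕ) : i ∈ Q ↔ i < p ∧ i ≠ 0 ∧ IsSquare (i : ZMod p) := by
    rw [← mem_coe, hQ]; rfl
  change gR ∣ toPoly p c ↔ _
  rw [← map_dvd_map' (algebraMap (ZMod 2) L), hgR,
    prod_X_sub_C_dvd_iff fun i hi j hj => hα.pow_inj ((hQ' i).mp hi).1 ((hQ' j).mp hj).1]
  simp_rw [eval_map_toPoly hα.pow_eq_one]
  constructor
  · intro h k hk0 hk
    simpa using h k.val ((hQ' _).mpr ⟨k.val_lt, (ZMod.val_ne_zero k).mpr hk0, by simpa using hk⟩)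
  · intro h i hi
    obtain ⟨hip, hi0, hsq⟩ := (hQ' i).mp hi
    refine h _ ?_ hsq
    rw [Ne, ZMod.natCast_eq_zero_iff]
    exact fun hpi => hi0 (Nat.eq_zero_of_dvd_of_lt hpi hip)

end Words

theorem stmt18_general (p : ℕ) (hp : p.Prime) (h4 : p % 4 = 3)
    (t : ℕ)
    (α : GaloisField 2 t) (hα : IsPrimitiveRoot α p)
    (Q : Finset ℕ)
    (hQ : (Q : Set ℕ) = {i : ℕ | i < p ∧ i ≠ 0 ∧ IsSquare ((i : ZMod p))})
    (gR : Polynomial (ZMod 2))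
    (hgR : gR.map (algebraMap (ZMod 2) (GaloisField 2 t)) = ∏ i ∈ Q, (X - C (α ^ i)))
    (d : ℕ)
    (hd : IsLeast {w : ℕ | ∃ c ∈ codeOf p gR, c ≠ 0 ∧
        w = (Finset.univ.filter (fun i => c i ≠ 0)).card} d) :
    d ^ 2 - d + 1 ≥ p := by
  have : Fact p.Prime := ⟨hp⟩
  have hcode := mem_codeOf_iff hα hQ hgR
  obtain ⟨⟨c, hc, hc0, rfl⟩, hmin⟩ := hd
  rw [← card_supportOf]
  refine IsQRSupport.le_card_sq_sub_card_add_one (zmodChar_primitive_of_primitive_root p hα) h4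
    ((hcode c).mp hc) ((supportOf_nonempty_iff c).mpr hc0) fun T hT hTQR => ?_
  have := hmin ⟨wordOf T, (hcode _).mpr (by rwa [supportOf_wordOf]),
    by rwa [← supportOf_nonempty_iff, supportOf_wordOf], rfl⟩
  rw [card_supportOf]
  rwa [← card_supportOf (wordOf T), supportOf_wordOf] at this

/-- Square root bound: let `p ≡ 3 (mod 4)` be an odd prime and `d` the minimum distance
of the binary quadratic residue code of length `p` generated by
`g_R(x) = ∏_{i∈Q}(x - α^i)`.  Then `d² - d + 1 ≥ p`. -/
theorem stmt18 (p : ℕ) (hp : p.Prime) (h4 : p % 4 = 3)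
    (t : ℕ) (ht : t = orderOf (2 : ZMod p))
    (α : GaloisField 2 t) (hα : IsPrimitiveRoot α p)
    (Q : Finset ℕ)
    (hQ : (Q : Set ℕ) = {i : ℕ | i < p ∧ i ≠ 0 ∧ IsSquare ((i : ZMod p))})
    (gR : Polynomial (ZMod 2))
    (hgR : gR.map (algebraMap (ZMod 2) (GaloisField 2 t)) = ∏ i ∈ Q, (X - C (α ^ i)))
    (d : ℕ)
    (hd : IsLeast {w : ℕ | ∃ c ∈ codeOf p gR, c ≠ 0 ∧
        w = (Finset.univ.filter (fun i => c i ≠ 0)).card} d) :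
    d ^ 2 - d + 1 ≥ p :=
  stmt18_general p hp h4 t α hα Q hQ gR hgR d hd
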